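/- For $t\in(0,T]$, every $x\in H^1(0,t;\mathbb{R})$ satisfies $\|x\|_{L^\infty(0,t)}^2 \le \coth(t)\int_0^t (x(s)^2+\dot x(s)^2)\,ds$. -/

import Mathlib

open MeasureTheory Set
open scoped ENNReal

/-- Product of two L² functions is integrable. -/
lemma myL2mul {μ : Measure ℝ} {f g : ℝ → ℝ} (hf : MemLp f 2 μ) (hg : MemLp g 2 μ) :
    Integrable (fun a => f a * g a) μ := by
  have h := hg.smul (φ := f) (r := 1) hf
  rw [memLp_one_iff_integrable] at h
  exact h

/-- Cauchy–Schwarz for integrals. -/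
lemma myCS {μ : Measure ℝ} {f g : ℝ → ℝ} (hf : MemLp f 2 μ) (hg : MemLp g 2 μ) :
    ∫ a, f a * g a ∂μ ≤ Real.sqrt (∫ a, f a ^ 2 ∂μ) * Real.sqrt (∫ a, g a ^ 2 ∂μ) := by
  have h2 : (2:ℝ≥0∞) = ENNReal.ofReal (2:ℝ) := by norm_num
  have hconj : (2:ℝ).HolderConjugate 2 := (Real.holderConjugate_iff_eq_conjExponent (by norm_num)).2 (by norm_num)
  have h1 : ∫ a, f a * g a ∂μ ≤ ∫ a, ‖f a‖ * ‖g a‖ ∂μ := by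
    refine integral_mono (myL2mul hf hg) (myL2mul hf.norm hg.norm) ?_
    intro a
    calc f a * g a ≤ |f a * g a| := le_abs_self _
    _ = ‖f a‖ * ‖g a‖ := by rw [abs_mul]; rfl
  have h3 := MeasureTheory.integral_mul_norm_le_Lp_mul_Lq hconj (h2 ▸ hf) (h2 ▸ hg)
  have e1 : ∀ (h : ℝ → ℝ), ∫ a, ‖h a‖ ^ (2:ℝ) ∂μ = ∫ a, h a ^ 2 ∂μ := by
    intro h
    refine integral_congr_ae (Filter.Eventually.of_forall fun a => ?_)
    show ‖h a‖ ^ (2:ℝ) = h a ^ 2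
    rw [show ((2:ℝ) = ((2:ℕ):ℝ)) by norm_num, Real.rpow_natCast]
    simp [sq_abs, Real.norm_eq_abs]
  rw [e1 f, e1 g] at h3
  have nn1 : (0:ℝ) ≤ ∫ a, f a ^ 2 ∂μ := integral_nonneg fun a => sq_nonneg _
  have nn2 : (0:ℝ) ≤ ∫ a, g a ^ 2 ∂μ := integral_nonneg fun a => sq_nonneg _
  calc ∫ a, f a * g a ∂μ ≤ ∫ a, ‖f a‖ * ‖g a‖ ∂μ := h1
  _ ≤ (∫ a, f a ^ 2 ∂μ) ^ (1/2:ℝ) * (∫ a, g a ^ 2 ∂μ) ^ (1/2:ℝ) := h3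
  _ = Real.sqrt (∫ a, f a ^ 2 ∂μ) * Real.sqrt (∫ a, g a ^ 2 ∂μ) := by
      rw [Real.sqrt_eq_rpow, Real.sqrt_eq_rpow]

/-- Integration by parts for a primitive against a C¹ weight, via Fubini. -/
lemma myIBP (p q c : ℝ) (hpq : p ≤ q) (g φ φ' : ℝ → ℝ)
    (hg : IntegrableOn g (Ioc p q) volume)
    (hφd : ∀ u, HasDerivAt φ (φ' u) u) (hφ' : Continuous φ') :
    ∫ u in Ioc p q, ((c + ∫ v in p..u, g v) * φ' u + g u * φ u)
      = (c + ∫ v in p..q, g v) * φ q - c * φ p := by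
  have hφc : Continuous φ := by
    rw [continuous_iff_continuousAt]; exact fun u => (hφd u).continuousAt
  have hgIcc : IntegrableOn g (Icc p q) volume :=
    (integrableOn_Icc_iff_integrableOn_Ioc (f := g)).2 hg
  have hgInt : IntervalIntegrable g volume p q := by
    rw [intervalIntegrable_iff_integrableOn_Ioc_of_le hpq]; exact hg
  have hprim : ContinuousOn (fun u => ∫ v in p..u, g v) (Icc p q) := by
    have := intervalIntegral.continuousOn_primitive_interval (a := p) (b := q)
      (μ := volume) (f := g) (by rwa [uIcc_of_le hpq])
    rwa [uIcc_of_le hpq] at this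
  -- integrabilities
  have i1 : IntegrableOn (fun u => (c + ∫ v in p..u, g v) * φ' u) (Ioc p q) volume := by
    refine (ContinuousOn.integrableOn_Icc ?_).mono_set Ioc_subset_Icc_self
    exact (continuousOn_const.add hprim).mul hφ'.continuousOn
  have i2 : IntegrableOn (fun u => g u * φ u) (Ioc p q) volume := by
    have := hgInt.mul_continuousOn (μ := volume) (by rw [uIcc_of_le hpq]; exact hφc.continuousOn)
    rwa [intervalIntegrable_iff_integrableOn_Ioc_of_le hpq] at this
  rw [integral_add i1 i2]
  -- split first term
  have i1a : IntegrableOn (fun u => φ' u) (Ioc p q) volume := hφ'.integrableOn_Ioc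
  have i1b : IntegrableOn (fun u => (∫ v in p..u, g v) * φ' u) (Ioc p q) volume := by
    refine (ContinuousOn.integrableOn_Icc ?_).mono_set Ioc_subset_Icc_self
    exact hprim.mul hφ'.continuousOn
  have hsplit : ∫ u in Ioc p q, (c + ∫ v in p..u, g v) * φ' u
      = c * (∫ u in Ioc p q, φ' u) + ∫ u in Ioc p q, (∫ v in p..u, g v) * φ' u := by
    rw [← integral_const_mul, ← integral_add ((i1a.const_mul c)) i1b]
    apply setIntegral_congr_fun measurableSet_Ioc
    intro u _; ring
  have hφint : ∫ u in Ioc p q, φ' u = φ q - φ p := by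
    rw [← intervalIntegral.integral_of_le hpq]
    exact intervalIntegral.integral_eq_sub_of_hasDerivAt (fun u _ => hφd u)
      (hφ'.intervalIntegrable p q)
  -- Fubini for the middle term
  set μ := volume.restrict (Ioc p q) with hμ
  have hμfin : IsFiniteMeasure μ := by
    constructor; rw [hμ, Measure.restrict_apply_univ]; exact measure_Ioc_lt_top
  set f2 : ℝ → ℝ → ℝ := fun u v => if v ≤ u then g v * φ' u else 0 with hf2
  have huncurry : Function.uncurry f2 =
      Set.indicator {z : ℝ × ℝ | z.2 ≤ z.1} (fun z => g z.2 * φ' z.1) := by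
    funext z
    simp only [Function.uncurry, hf2, Set.indicator_apply, Set.mem_setOf_eq]
  have hbase : Integrable (fun z : ℝ × ℝ => g z.2 * φ' z.1) (μ.prod μ) := by
    have h := (hφ'.integrableOn_Ioc (μ := volume) (a := p) (b := q)).mul_prod (hg)
    exact h.congr (Filter.Eventually.of_forall fun z => mul_comm _ _)
  have hIf2 : Integrable (Function.uncurry f2) (μ.prod μ) := by
    rw [huncurry]
    exact hbase.indicator (measurableSet_le measurable_snd measurable_fst)
  have hswap := MeasureTheory.integral_integral_swap hIf2
  have hleft : ∫ u in Ioc p q, (∫ v in p..u, g v) * φ' u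
      = ∫ u, (∫ v, f2 u v ∂μ) ∂μ := by
    refine (setIntegral_congr_fun measurableSet_Ioc fun u hu => ?_)
    have hindic : f2 u = (Iic u).indicator (fun v => g v * φ' u) := by
      funext v; simp [hf2, Set.indicator_apply]
    rw [hindic, hμ, setIntegral_indicator measurableSet_Iic, Ioc_inter_Iic,
      min_eq_right hu.2, integral_mul_const, intervalIntegral.integral_of_le hu.1.le]
  have hright : ∫ v, (∫ u, f2 u v ∂μ) ∂μ
      = ∫ v in Ioc p q, g v * (φ q - φ v) := by
    refine (setIntegral_congr_fun measurableSet_Ioc fun v hv => ?_).symm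
    have hindic : (fun u => f2 u v) = (Ici v).indicator (fun u => g v * φ' u) := by
      funext u; simp [hf2, Set.indicator_apply]
    have hset : Ioc p q ∩ Ici v = Icc v q := by
      ext u
      simp only [mem_inter_iff, mem_Ioc, mem_Ici, mem_Icc]
      constructor
      · rintro ⟨⟨_, h2⟩, h3⟩; exact ⟨h3, h2⟩
      · rintro ⟨h1, h2⟩; exact ⟨⟨lt_of_lt_of_le hv.1 h1, h2⟩, h1⟩
    rw [hindic, hμ, setIntegral_indicator measurableSet_Ici, hset,
      integral_Icc_eq_integral_Ioc, MeasureTheory.integral_const_mul,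
      ← intervalIntegral.integral_of_le hv.2,
      intervalIntegral.integral_eq_sub_of_hasDerivAt (fun u _ => hφd u)
        (hφ'.intervalIntegrable v q)]
  have hmid : ∫ u in Ioc p q, (∫ v in p..u, g v) * φ' u
      = ∫ v in Ioc p q, g v * (φ q - φ v) := by rw [hleft, hswap, hright]
  have hmid2 : ∫ v in Ioc p q, g v * (φ q - φ v)
      = (∫ v in Ioc p q, g v) * φ q - ∫ v in Ioc p q, g v * φ v := by
    rw [← integral_mul_const, ← integral_sub (hg.mul_const (φ q)) i2]
    apply setIntegral_congr_fun measurableSet_Ioc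
    intro v _; ring
  rw [hsplit, hφint, hmid, hmid2, intervalIntegral.integral_of_le hpq]
  ring

/-- Per-piece Cauchy–Schwarz bound. -/
lemma myPiece (p q : ℝ) (w1 w2 f h : ℝ → ℝ) (hw1 : Continuous w1) (hw2 : Continuous w2)
    (hf : AEStronglyMeasurable f (volume.restrict (Ioc p q)))
    (hh : AEStronglyMeasurable h (volume.restrict (Ioc p q)))
    (hf2 : IntegrableOn (fun u => f u ^ 2) (Ioc p q) volume)
    (hh2 : IntegrableOn (fun u => h u ^ 2) (Ioc p q) volume) :
    |∫ u in Ioc p q, (f u * w1 u + h u * w2 u)| ≤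
      Real.sqrt (∫ u in Ioc p q, (w1 u ^ 2 + w2 u ^ 2)) *
      Real.sqrt (∫ u in Ioc p q, (f u ^ 2 + h u ^ 2)) := by
  set μ := volume.restrict (Ioc p q) with hμ
  set W : ℝ → ℝ := fun u => Real.sqrt (w1 u ^ 2 + w2 u ^ 2) with hW
  set F : ℝ → ℝ := fun u => Real.sqrt (f u ^ 2 + h u ^ 2) with hF
  have hWsq : ∀ u, W u ^ 2 = w1 u ^ 2 + w2 u ^ 2 := fun u => Real.sq_sqrt (by positivity)
  have hFsq : ∀ u, F u ^ 2 = f u ^ 2 + h u ^ 2 := fun u => Real.sq_sqrt (by positivity)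
  have hWc : Continuous W := ((hw1.pow 2).add (hw2.pow 2)).sqrt
  have hFm : AEStronglyMeasurable F μ :=
    Real.continuous_sqrt.comp_aestronglyMeasurable
      (hf2.aestronglyMeasurable.add hh2.aestronglyMeasurable)
  have hFL2 : MemLp F 2 μ := by
    refine (memLp_two_iff_integrable_sq hFm).2 ?_
    have : (fun u => F u ^ 2) = fun u => f u ^ 2 + h u ^ 2 := funext hFsq
    rw [this]; exact hf2.add hh2
  have hWL2 : MemLp W 2 μ := by
    refine (memLp_two_iff_integrable_sq hWc.aestronglyMeasurable).2 ?_
    have : (fun u => W u ^ 2) = fun u => w1 u ^ 2 + w2 u ^ 2 := funext hWsq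
    rw [this]
    exact ((hw1.pow 2).add (hw2.pow 2)).integrableOn_Ioc
  have hfL2 : MemLp f 2 μ := (memLp_two_iff_integrable_sq hf).2 hf2
  have hhL2 : MemLp h 2 μ := (memLp_two_iff_integrable_sq hh).2 hh2
  have hw1L2 : MemLp w1 2 μ := (memLp_two_iff_integrable_sq hw1.aestronglyMeasurable).2
    ((hw1.pow 2).integrableOn_Ioc)
  have hw2L2 : MemLp w2 2 μ := (memLp_two_iff_integrable_sq hw2.aestronglyMeasurable).2
    ((hw2.pow 2).integrableOn_Ioc)
  have hptwise : ∀ u, |f u * w1 u + h u * w2 u| ≤ W u * F u := by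
    intro u
    have key : (f u * w1 u + h u * w2 u) ^ 2 ≤ (W u * F u) ^ 2 := by
      rw [mul_pow, hWsq, hFsq]
      nlinarith [sq_nonneg (f u * w2 u - h u * w1 u)]
    calc |f u * w1 u + h u * w2 u| = Real.sqrt ((f u * w1 u + h u * w2 u) ^ 2) :=
          (Real.sqrt_sq_eq_abs _).symm
    _ ≤ Real.sqrt ((W u * F u) ^ 2) := Real.sqrt_le_sqrt key
    _ = W u * F u := Real.sqrt_sq (by positivity)
  have hint1 : Integrable (fun u => f u * w1 u + h u * w2 u) μ :=
    (myL2mul hfL2 hw1L2).add (myL2mul hhL2 hw2L2)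
  have hint2 : Integrable (fun u => W u * F u) μ := myL2mul hWL2 hFL2
  have step1 : |∫ u in Ioc p q, (f u * w1 u + h u * w2 u)| ≤ ∫ u, W u * F u ∂μ := by
    calc |∫ u in Ioc p q, (f u * w1 u + h u * w2 u)|
        ≤ ∫ u, |f u * w1 u + h u * w2 u| ∂μ := by
          rw [← Real.norm_eq_abs]
          exact (norm_integral_le_integral_norm _).trans (le_of_eq rfl)
    _ ≤ ∫ u, W u * F u ∂μ := integral_mono hint1.abs hint2 fun u => hptwise u
  have step2 := myCS hWL2 hFL2
  have eW : ∫ u, W u ^ 2 ∂μ = ∫ u in Ioc p q, (w1 u ^ 2 + w2 u ^ 2) := by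
    rw [hμ]; exact integral_congr_ae (Filter.Eventually.of_forall fun u => hWsq u)
  have eF : ∫ u, F u ^ 2 ∂μ = ∫ u in Ioc p q, (f u ^ 2 + h u ^ 2) := by
    rw [hμ]; exact integral_congr_ae (Filter.Eventually.of_forall fun u => hFsq u)
  rw [eW, eF] at step2
  exact step1.trans step2

lemma myCS2 (p q A B C D : ℝ) :
    (p * (A * B) + q * (C * D)) ^ 2 ≤ (p ^ 2 * A ^ 2 + q ^ 2 * C ^ 2) * (B ^ 2 + D ^ 2) := by
  nlinarith [sq_nonneg (p * A * D - q * C * B)]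

lemma myFinal (X S C I : ℝ) (hS : 0 < S) (h : X * S ^ 2 ≤ C * S * I) : X * S ≤ C * I := by
  nlinarith [h, hS]

/-- the embedding inequality
`‖x‖²_{L∞(0,t)} ≤ coth(t) ∫₀ᵗ (x² + ẋ²) ds` for `x ∈ H¹(0,t;ℝ)`,
stated for the continuous representative via the fundamental theorem of calculus. -/
theorem stmt2 (t : ℝ) (ht : 0 < t) (x x' : ℝ → ℝ)
    (hx : ∀ s ∈ Icc (0:ℝ) t, x s = x 0 + ∫ u in (0:ℝ)..s, x' u)
    (hint : IntervalIntegrable x' volume 0 t)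
    (hL2 : MemLp x' 2 (volume.restrict (Ioc (0:ℝ) t))) :
    ∀ s ∈ Icc (0:ℝ) t,
      (x s) ^ 2 ≤ (Real.cosh t / Real.sinh t) *
        ∫ u in Ioc (0:ℝ) t, ((x u) ^ 2 + (x' u) ^ 2) := by
  intro s hs
  obtain ⟨hs0, hst⟩ := hs
  -- continuity of x on [0,t]
  have hIccInt : IntegrableOn x' (Icc 0 t) volume :=
    (integrableOn_Icc_iff_integrableOn_Ioc (f := x')).2 hint.1
  have hxc : ContinuousOn x (Icc 0 t) := by
    have hprim : ContinuousOn (fun u => x 0 + ∫ v in (0:ℝ)..u, x' v) (Icc 0 t) := by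
      have h := intervalIntegral.continuousOn_primitive_interval (a := 0) (b := t)
        (μ := volume) (f := x') (by rwa [uIcc_of_le ht.le])
      rw [uIcc_of_le ht.le] at h
      exact continuousOn_const.add h
    exact hprim.congr hx
  -- subset facts
  have hsub1 : Ioc (0:ℝ) s ⊆ Icc 0 t := fun u hu => ⟨hu.1.le, hu.2.trans hst⟩
  have hsub1' : Ioc (0:ℝ) s ⊆ Ioc 0 t := Ioc_subset_Ioc_right hst
  have hsub2 : Ioc s t ⊆ Icc 0 t := fun u hu => ⟨hs0.trans hu.1.le, hu.2⟩
  have hsub2' : Ioc s t ⊆ Ioc 0 t := Ioc_subset_Ioc_left hs0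
  -- measurability / integrability on pieces
  have hxm1 : AEStronglyMeasurable x (volume.restrict (Ioc 0 s)) :=
    (hxc.mono hsub1).aestronglyMeasurable measurableSet_Ioc
  have hxm2 : AEStronglyMeasurable x (volume.restrict (Ioc s t)) :=
    (hxc.mono hsub2).aestronglyMeasurable measurableSet_Ioc
  have hx'm1 : AEStronglyMeasurable x' (volume.restrict (Ioc 0 s)) :=
    hL2.1.mono_measure (Measure.restrict_mono hsub1' le_rfl)
  have hx'm2 : AEStronglyMeasurable x' (volume.restrict (Ioc s t)) :=
    hL2.1.mono_measure (Measure.restrict_mono hsub2' le_rfl)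
  have hx2Icc : IntegrableOn (fun u => x u ^ 2) (Icc 0 t) volume :=
    (hxc.pow 2).integrableOn_Icc
  have hx21 : IntegrableOn (fun u => x u ^ 2) (Ioc 0 s) volume := hx2Icc.mono_set hsub1
  have hx22 : IntegrableOn (fun u => x u ^ 2) (Ioc s t) volume := hx2Icc.mono_set hsub2
  have hx'sq : Integrable (fun u => x' u ^ 2) (volume.restrict (Ioc 0 t)) := hL2.integrable_sq
  have hx'21 : IntegrableOn (fun u => x' u ^ 2) (Ioc 0 s) volume :=
    hx'sq.mono_measure (Measure.restrict_mono hsub1' le_rfl)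
  have hx'22 : IntegrableOn (fun u => x' u ^ 2) (Ioc s t) volume :=
    hx'sq.mono_measure (Measure.restrict_mono hsub2' le_rfl)
  -- the two identities
  have hφd1 : ∀ u : ℝ, HasDerivAt Real.sinh (Real.cosh u) u := fun u => by
    simpa using (hasDerivAt_id u).sinh
  have hid1 : ∫ u in Ioc (0:ℝ) s, (x u * Real.cosh u + x' u * Real.sinh u)
      = x s * Real.sinh s := by
    have hib := myIBP 0 s (x 0) hs0 x' Real.sinh Real.cosh
      (hint.1.mono_set hsub1') hφd1 Real.continuous_cosh
    have hcongr : ∫ u in Ioc (0:ℝ) s, (x u * Real.cosh u + x' u * Real.sinh u)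
        = ∫ u in Ioc (0:ℝ) s, ((x 0 + ∫ v in (0:ℝ)..u, x' v) * Real.cosh u
            + x' u * Real.sinh u) := by
      refine setIntegral_congr_fun measurableSet_Ioc fun u hu => ?_
      rw [← hx u (hsub1 hu)]
    rw [hcongr, hib, ← hx s ⟨hs0, hst⟩, Real.sinh_zero, mul_zero, sub_zero]
  have hseg : ∀ u ∈ Icc s t, x u = x s + ∫ v in s..u, x' v := by
    intro u hu
    have h3 : IntervalIntegrable x' volume 0 u := hint.mono_set
      (by rw [uIcc_of_le (hs0.trans hu.1), uIcc_of_le ht.le]; exact Icc_subset_Icc le_rfl hu.2)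
    have h4 : IntervalIntegrable x' volume 0 s := hint.mono_set
      (by rw [uIcc_of_le hs0, uIcc_of_le ht.le]; exact Icc_subset_Icc le_rfl hst)
    have h5 := intervalIntegral.integral_interval_sub_left h3 h4
    rw [hx u ⟨hs0.trans hu.1, hu.2⟩, hx s ⟨hs0, hst⟩, ← h5]; ring
  have hφd2 : ∀ u : ℝ, HasDerivAt (fun y => -Real.sinh (t - y)) (Real.cosh (t - u)) u := by
    intro u
    have h1 : HasDerivAt (fun y : ℝ => t - y) (-1) u := (hasDerivAt_id u).const_sub t
    exact h1.sinh.neg.congr_deriv (by ring)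
  have hφ'2 : Continuous fun u : ℝ => Real.cosh (t - u) :=
    Real.continuous_cosh.comp (continuous_const.sub continuous_id)
  have hw22 : Continuous fun u : ℝ => -Real.sinh (t - u) :=
    (Real.continuous_sinh.comp (continuous_const.sub continuous_id)).neg
  have hid2 : ∫ u in Ioc s t, (x u * Real.cosh (t - u) + x' u * (-Real.sinh (t - u)))
      = x s * Real.sinh (t - s) := by
    have hib := myIBP s t (x s) hst x' (fun y => -Real.sinh (t - y)) (fun u => Real.cosh (t - u))
      (hint.1.mono_set hsub2') hφd2 hφ'2
    have hcongr : ∫ u in Ioc s t, (x u * Real.cosh (t - u) + x' u * (-Real.sinh (t - u)))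
        = ∫ u in Ioc s t, ((x s + ∫ v in s..u, x' v) * Real.cosh (t - u)
            + x' u * (-Real.sinh (t - u))) := by
      refine setIntegral_congr_fun measurableSet_Ioc fun u hu => ?_
      rw [← hseg u ⟨hu.1.le, hu.2⟩]
    rw [hcongr, hib]
    simp [sub_self]
  -- weight integrals
  have hc1 : ∫ u in Ioc (0:ℝ) s, (Real.cosh u ^ 2 + Real.sinh u ^ 2)
      = Real.sinh s * Real.cosh s := by
    have hA : ∀ u : ℝ, HasDerivAt (fun y => Real.sinh y * Real.cosh y)
        (Real.cosh u ^ 2 + Real.sinh u ^ 2) u := by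
      intro u
      have h1 : HasDerivAt Real.sinh (Real.cosh u) u := hφd1 u
      have h2 : HasDerivAt Real.cosh (Real.sinh u) u := by simpa using (hasDerivAt_id u).cosh
      exact (h1.mul h2).congr_deriv (by ring)
    rw [← intervalIntegral.integral_of_le hs0,
      intervalIntegral.integral_eq_sub_of_hasDerivAt (fun u _ => hA u)
        (((Real.continuous_cosh.pow 2).add (Real.continuous_sinh.pow 2)).intervalIntegrable 0 s)]
    simp
  have hc2 : ∫ u in Ioc s t, (Real.cosh (t - u) ^ 2 + (-Real.sinh (t - u)) ^ 2)
      = Real.sinh (t - s) * Real.cosh (t - s) := by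
    have hB : ∀ u : ℝ, HasDerivAt (fun y => -(Real.sinh (t - y) * Real.cosh (t - y)))
        (Real.cosh (t - u) ^ 2 + (-Real.sinh (t - u)) ^ 2) u := by
      intro u
      have h1 : HasDerivAt (fun y : ℝ => t - y) (-1) u := (hasDerivAt_id u).const_sub t
      exact (h1.sinh.mul h1.cosh).neg.congr_deriv (by ring)
    rw [← intervalIntegral.integral_of_le hst,
      intervalIntegral.integral_eq_sub_of_hasDerivAt (fun u _ => hB u)
        (((hφ'2.pow 2).add (hw22.pow 2)).intervalIntegrable s t)]
    simp [sub_self]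
  -- Cauchy–Schwarz on each piece
  have E1 := myPiece 0 s Real.cosh Real.sinh x x' Real.continuous_cosh Real.continuous_sinh
    hxm1 hx'm1 hx21 hx'21
  have E2 := myPiece s t (fun u => Real.cosh (t - u)) (fun u => -Real.sinh (t - u)) x x'
    hφ'2 hw22 hxm2 hx'm2 hx22 hx'22
  rw [hid1, hc1] at E1
  rw [hid2, hc2] at E2
  -- final arithmetic
  set a := Real.sinh s with ha_def
  set b := Real.sinh (t - s) with hb_def
  set ca := Real.cosh s with hca_def
  set cb := Real.cosh (t - s) with hcb_def
  set I1 := ∫ u in Ioc (0:ℝ) s, (x u ^ 2 + x' u ^ 2) with hI1_def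
  set I2 := ∫ u in Ioc s t, (x u ^ 2 + x' u ^ 2) with hI2_def
  have ha : 0 ≤ a := Real.sinh_nonneg_iff.2 hs0
  have hb : 0 ≤ b := Real.sinh_nonneg_iff.2 (by linarith)
  have hca : 0 < ca := Real.cosh_pos s
  have hcb : 0 < cb := Real.cosh_pos (t - s)
  have hI1 : 0 ≤ I1 := setIntegral_nonneg measurableSet_Ioc fun u _ => by positivity
  have hI2 : 0 ≤ I2 := setIntegral_nonneg measurableSet_Ioc fun u _ => by positivity
  have hItot : ∫ u in Ioc (0:ℝ) t, (x u ^ 2 + x' u ^ 2) = I1 + I2 := by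
    have hpc1 : IntegrableOn (fun u => x u ^ 2 + x' u ^ 2) (Ioc 0 s) volume := hx21.add hx'21
    have hpc2 : IntegrableOn (fun u => x u ^ 2 + x' u ^ 2) (Ioc s t) volume := hx22.add hx'22
    rw [← Ioc_union_Ioc_eq_Ioc hs0 hst,
      setIntegral_union (Ioc_disjoint_Ioc_of_le le_rfl) measurableSet_Ioc hpc1 hpc2]
  have hsinht : Real.sinh t = a * cb + ca * b := by
    have h := Real.sinh_add s (t - s)
    rw [show s + (t - s) = t by ring] at h
    rw [h]
  have hcosht : Real.cosh t = ca * cb + a * b := by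
    have h := Real.cosh_add s (t - s)
    rw [show s + (t - s) = t by ring] at h
    rw [h]
  have hsinht_pos : 0 < Real.sinh t := by
    have := Real.sinh_pos_iff (x := t); exact this.2 ht
  set u1 := Real.sqrt (a * ca) with hu1_def
  set u2 := Real.sqrt (b * cb) with hu2_def
  set v1 := Real.sqrt I1 with hv1_def
  set v2 := Real.sqrt I2 with hv2_def
  have hu1sq : u1 ^ 2 = a * ca := Real.sq_sqrt (by positivity)
  have hu2sq : u2 ^ 2 = b * cb := Real.sq_sqrt (by positivity)
  have hv1sq : v1 ^ 2 = I1 := Real.sq_sqrt hI1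
  have hv2sq : v2 ^ 2 = I2 := Real.sq_sqrt hI2
  have hu1 : 0 ≤ u1 := Real.sqrt_nonneg _
  have hu2 : 0 ≤ u2 := Real.sqrt_nonneg _
  have hv1 : 0 ≤ v1 := Real.sqrt_nonneg _
  have hv2 : 0 ≤ v2 := Real.sqrt_nonneg _
  clear_value a b ca cb I1 I2 u1 u2 v1 v2
  have key1 : |x s| * a ≤ u1 * v1 := by
    have := E1
    rwa [abs_mul, abs_of_nonneg ha] at this
  have key2 : |x s| * b ≤ u2 * v2 := by
    have := E2
    rwa [abs_mul, abs_of_nonneg hb] at this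
  have habs : |x s| * Real.sinh t ≤ cb * (u1 * v1) + ca * (u2 * v2) := by
    calc |x s| * Real.sinh t = cb * (|x s| * a) + ca * (|x s| * b) := by rw [hsinht]; ring
    _ ≤ cb * (u1 * v1) + ca * (u2 * v2) :=
        add_le_add (mul_le_mul_of_nonneg_left key1 hcb.le)
          (mul_le_mul_of_nonneg_left key2 hca.le)
  have hsq : (|x s| * Real.sinh t) ^ 2 ≤ (cb * (u1 * v1) + ca * (u2 * v2)) ^ 2 :=
    pow_le_pow_left₀ (by positivity) habs 2
  have hRsq : (cb * (u1 * v1) + ca * (u2 * v2)) ^ 2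
      ≤ (cb ^ 2 * u1 ^ 2 + ca ^ 2 * u2 ^ 2) * (v1 ^ 2 + v2 ^ 2) := by
    exact myCS2 cb ca u1 v1 u2 v2
  have hwsum : cb ^ 2 * u1 ^ 2 + ca ^ 2 * u2 ^ 2 = ca * cb * Real.sinh t := by
    rw [hu1sq, hu2sq, hsinht]; ring
  have hcc : ca * cb ≤ Real.cosh t := by
    rw [hcosht]; exact le_add_of_nonneg_right (mul_nonneg ha hb)
  have hmain : x s ^ 2 * Real.sinh t ^ 2 ≤ Real.cosh t * Real.sinh t * (I1 + I2) := by
    have h1 : x s ^ 2 * Real.sinh t ^ 2 = (|x s| * Real.sinh t) ^ 2 := by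
      rw [mul_pow, sq_abs]
    have h2 : (cb ^ 2 * u1 ^ 2 + ca ^ 2 * u2 ^ 2) * (v1 ^ 2 + v2 ^ 2)
        = ca * cb * Real.sinh t * (I1 + I2) := by rw [hwsum, hv1sq, hv2sq]
    have h3 : ca * cb * Real.sinh t * (I1 + I2) ≤ Real.cosh t * Real.sinh t * (I1 + I2) := by
      have h4 : (0:ℝ) ≤ Real.sinh t * (I1 + I2) := by positivity
      calc ca * cb * Real.sinh t * (I1 + I2) = (ca * cb) * (Real.sinh t * (I1 + I2)) := by ring
      _ ≤ Real.cosh t * (Real.sinh t * (I1 + I2)) := mul_le_mul_of_nonneg_right hcc h4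
      _ = Real.cosh t * Real.sinh t * (I1 + I2) := by ring
    calc x s ^ 2 * Real.sinh t ^ 2 = (|x s| * Real.sinh t) ^ 2 := h1
    _ ≤ (cb * (u1 * v1) + ca * (u2 * v2)) ^ 2 := hsq
    _ ≤ (cb ^ 2 * u1 ^ 2 + ca ^ 2 * u2 ^ 2) * (v1 ^ 2 + v2 ^ 2) := hRsq
    _ = ca * cb * Real.sinh t * (I1 + I2) := h2
    _ ≤ Real.cosh t * Real.sinh t * (I1 + I2) := h3
  rw [hItot, div_mul_eq_mul_div, le_div_iff₀ hsinht_pos]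
  exact myFinal (x s ^ 2) (Real.sinh t) (Real.cosh t) (I1 + I2) hsinht_pos hmain
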